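/- arXiv:1802.01914 — 4 statements merged into one kernel-verified Lean document; each statement's English description precedes it below -/
import Mathlib

section
/- Let V be a finite set and f, g : 2^V → ℝ two submodular functions such that the difference d(X) := f(X) − g(X) is monotone decreasing (i.e. d(Y) ≤ d(X) whenever X ⊆ Y ⊆ V). Then the pointwise minimum h(X) := min(f(X), g(X)) is submodular. -/
/-- If `f` and `g` are submodular set functions on a finite set `V`
and the difference `d X = f X - g X` is monotone decreasing (`d Y ≤ d X` whenever
`X ⊆ Y`), then the pointwise minimum `h X = min (f X) (g X)` is submodular. -/
theorem min_of_submodular_decreasing_diff_submodular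
    {α : Type*} [Fintype α] [DecidableEq α]
    (f g : Finset α → ℝ)
    (hf : ∀ X Y : Finset α, f X + f Y ≥ f (X ∪ Y) + f (X ∩ Y))
    (hg : ∀ X Y : Finset α, g X + g Y ≥ g (X ∪ Y) + g (X ∩ Y))
    (hd : ∀ X Y : Finset α, X ⊆ Y → f Y - g Y ≤ f X - g X) :
    ∀ X Y : Finset α,
      min (f X) (g X) + min (f Y) (g Y) ≥
        min (f (X ∪ Y)) (g (X ∪ Y)) + min (f (X ∩ Y)) (g (X ∩ Y)) := by
  intro X Y
  have hu1 := min_le_left (f (X ∪ Y)) (g (X ∪ Y))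
  have hu2 := min_le_right (f (X ∪ Y)) (g (X ∪ Y))
  have hi1 := min_le_left (f (X ∩ Y)) (g (X ∩ Y))
  have hi2 := min_le_right (f (X ∩ Y)) (g (X ∩ Y))
  have hfXY := hf X Y
  have hgXY := hg X Y
  rcases le_total (f X) (g X) with hX | hX <;>
  rcases le_total (f Y) (g Y) with hY | hY
  · rw [min_eq_left hX, min_eq_left hY]; linarith
  · rw [min_eq_left hX, min_eq_right hY]
    have := hd X (X ∪ Y) Finset.subset_union_left
    linarith
  · rw [min_eq_right hX, min_eq_left hY]
    have := hd Y (X ∪ Y) Finset.subset_union_right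
    linarith
  · rw [min_eq_right hX, min_eq_right hY]; linarith
end

section
/- Let V be a finite set and f, g : 2^V → ℝ two submodular functions such that the difference d(X) := f(X) − g(X) is monotone increasing (i.e. d(X) ≤ d(Y) whenever X ⊆ Y ⊆ V). Then the pointwise minimum h(X) := min(f(X), g(X)) is submodular. -/
/-- If `f` and `g` are submodular set functions on a finite set `V`
and the difference `d X = f X - g X` is monotone increasing (`d X ≤ d Y` whenever
`X ⊆ Y`), then the pointwise minimum `h X = min (f X) (g X)` is submodular. -/
theorem min_of_submodular_increasing_diff_submodular
    {α : Type*} [Fintype α] [DecidableEq α]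
    (f g : Finset α → ℝ)
    (hf : ∀ X Y : Finset α, f X + f Y ≥ f (X ∪ Y) + f (X ∩ Y))
    (hg : ∀ X Y : Finset α, g X + g Y ≥ g (X ∪ Y) + g (X ∩ Y))
    (hd : ∀ X Y : Finset α, X ⊆ Y → f X - g X ≤ f Y - g Y) :
    ∀ X Y : Finset α,
      min (f X) (g X) + min (f Y) (g Y) ≥
        min (f (X ∪ Y)) (g (X ∪ Y)) + min (f (X ∩ Y)) (g (X ∩ Y)) := by
  intro X Y
  have h1 := hf X Y
  have h2 := hg X Y
  have h3 := hd Y (X ∪ Y) Finset.subset_union_right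
  have h4 := hd X (X ∪ Y) Finset.subset_union_left
  have mfu := min_le_left (f (X ∪ Y)) (g (X ∪ Y))
  have mgu := min_le_right (f (X ∪ Y)) (g (X ∪ Y))
  have mfi := min_le_left (f (X ∩ Y)) (g (X ∩ Y))
  have mgi := min_le_right (f (X ∩ Y)) (g (X ∩ Y))
  rcases le_total (f X) (g X) with hx | hx <;> rcases le_total (f Y) (g Y) with hy | hy
  · rw [min_eq_left hx, min_eq_left hy]; linarith
  · rw [min_eq_left hx, min_eq_right hy]; linarith
  · rw [min_eq_right hx, min_eq_left hy]; linarith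
  · rw [min_eq_right hx, min_eq_right hy]; linarith
end

section
/- Let V be a finite set and f : 2^V → ℝ two submodular functions, and suppose f and g are submodular with d(X) := f(X) − g(X) monotone (either increasing or decreasing). Then for all X, Y ⊆ V, at least one of the two inequalities f(X) + g(Y) ≥ f(X ∪ Y) + g(X ∩ Y) or f(X) + g(Y) ≥ g(X ∪ Y) + f(X ∩ Y) holds. -/
/-- If `f` and `g` are submodular set functions on a finite set `V`
and the difference `d X = f X - g X` is monotone (either increasing or
decreasing), then for all `X, Y ⊆ V` at least one of the cross inequalities
`f X + g Y ≥ f (X ∪ Y) + g (X ∩ Y)` or `f X + g Y ≥ g (X ∪ Y) + f (X ∩ Y)`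
holds. -/
theorem cross_inequality_of_monotone_diff
    {α : Type*} [Fintype α] [DecidableEq α]
    (f g : Finset α → ℝ)
    (hf : ∀ X Y : Finset α, f X + f Y ≥ f (X ∪ Y) + f (X ∩ Y))
    (hg : ∀ X Y : Finset α, g X + g Y ≥ g (X ∪ Y) + g (X ∩ Y))
    (hd : (∀ X Y : Finset α, X ⊆ Y → f X - g X ≤ f Y - g Y) ∨
          (∀ X Y : Finset α, X ⊆ Y → f Y - g Y ≤ f X - g X)) :
    ∀ X Y : Finset α,
      f X + g Y ≥ f (X ∪ Y) + g (X ∩ Y) ∨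
      f X + g Y ≥ g (X ∪ Y) + f (X ∩ Y) := by
  intro X Y
  rcases hd with h | h
  · right
    have h1 := h (X ∩ Y) X Finset.inter_subset_left
    have h2 := hg X Y
    linarith
  · left
    have h1 := h X (X ∪ Y) Finset.subset_union_left
    have h2 := hg X Y
    linarith
end

section
/- Let k ≥ 2, V a finite set with |V| ≥ k, and f : 2^V → ℝ a function with f(∅) = 0. With the recursively defined functions g_{2,X}(Y) := f(Y) + f(X \ Y), h_{m−1,X}(Y) := f(Y) + min_{∅ ⊂ U' ⊂ X \ Y} g_{m−1, X \ Y}(U') (set to +∞ if |X \ Y| ≤ 1), and g_{m,X}(Y) := min( h_{m−1,X}(Y), h_{m−1,X}(X \ Y) ) for m > 2, one has the identity min over all k-partitions (U₁, …, U_k) of V of Σ_{i=1}^{k} f(U_i) = min_{∅ ⊂ U ⊂ V} g_{k,V}(U). -/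
open Finset

/-- `IsKPartition π W` : the tuple `π : Fin k → Finset α` is a `k`-partition of
`W`, i.e. its members are pairwise disjoint nonempty sets whose union is `W`. -/
def IsKPartition {α : Type*} [DecidableEq α] {k : ℕ}
    (π : Fin k → Finset α) (W : Finset α) : Prop :=
  (∀ i, (π i).Nonempty) ∧ (∀ i j, i ≠ j → Disjoint (π i) (π j)) ∧
    Finset.univ.biUnion π = W

/-- The auxiliary function `h_{m,X}(Y) = f Y + min_{∅ ⊂ U' ⊂ X \ Y} g_{m,X\Y}(U')`,
where `g` is supplied as an argument.  When `|X \ Y| ≤ 1` the range of the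
infimum is empty, so the infimum is `+∞` in the extended reals. -/
noncomputable def hAux {α : Type*} [DecidableEq α] (f : Finset α → ℝ)
    (g : Finset α → Finset α → EReal) (X Y : Finset α) : EReal :=
  ((f Y : ℝ) : EReal) +
    sInf {r : EReal | ∃ U' : Finset α, U'.Nonempty ∧ U' ⊂ X \ Y ∧ r = g (X \ Y) U'}

/-- The recursively defined symmetrized `m`-partition functions:
`g_{2,X}(Y) = f Y + f (X \ Y)`, and for `m > 2`
`g_{m,X}(Y) = min (h_{m-1,X}(Y)) (h_{m-1,X}(X \ Y))`.
(The values for `m = 0, 1` are irrelevant dummies, set to `+∞`.) -/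
noncomputable def gRec {α : Type*} [DecidableEq α] (f : Finset α → ℝ) :
    ℕ → Finset α → Finset α → EReal
  | 0, _, _ => ⊤
  | 1, _, _ => ⊤
  | 2, X, Y => ((f Y + f (X \ Y) : ℝ) : EReal)
  | (m + 3), X, Y =>
      min (hAux f (gRec f (m + 2)) X Y) (hAux f (gRec f (m + 2)) X (X \ Y))

lemma ereal_coe_add_sInf (c : ℝ) (S : Set EReal) :
    (c : EReal) + sInf S = sInf ((fun x => (c : EReal) + x) '' S) := by
  apply le_antisymm
  · refine le_sInf fun b hb => ?_
    obtain ⟨x, hx, rfl⟩ := hb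
    exact add_le_add_right (sInf_le hx) _
  · have key : ((-c : ℝ) : EReal) + sInf ((fun x => (c : EReal) + x) '' S) ≤ sInf S := by
      refine le_sInf fun x hx => ?_
      calc ((-c : ℝ) : EReal) + sInf ((fun x => (c : EReal) + x) '' S)
          ≤ ((-c : ℝ) : EReal) + ((c : EReal) + x) := by
            have hm : (c : EReal) + x ∈ (fun x => (c : EReal) + x) '' S := ⟨x, hx, rfl⟩
            exact add_le_add_right (sInf_le hm) _
        _ = x := by
            rw [← add_assoc, ← EReal.coe_add, neg_add_cancel, EReal.coe_zero, zero_add]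
    calc sInf ((fun x => (c : EReal) + x) '' S)
        = (c : EReal) + (((-c : ℝ) : EReal) + sInf ((fun x => (c : EReal) + x) '' S)) := by
          rw [← add_assoc, ← EReal.coe_add, add_neg_cancel, EReal.coe_zero, zero_add]
      _ ≤ (c : EReal) + sInf S := add_le_add_right key _

noncomputable def pMin {α : Type*} [DecidableEq α] (f : Finset α → ℝ) (m : ℕ)
    (X : Finset α) : EReal :=
  sInf {r : EReal | ∃ π : Fin m → Finset α,
    IsKPartition π X ∧ r = ((∑ i, f (π i) : ℝ) : EReal)}

lemma part_cons {α : Type*} [DecidableEq α] {n : ℕ} {U X : Finset α}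
    (hU : U.Nonempty) (hUX : U ⊂ X) {σ : Fin n → Finset α}
    (hσ : IsKPartition σ (X \ U)) : IsKPartition (Fin.cons U σ) X := by
  obtain ⟨h1, h2, h3⟩ := hσ
  have hsub : ∀ i, σ i ⊆ X \ U := by
    intro i; rw [← h3]; exact subset_biUnion_of_mem σ (mem_univ i)
  refine ⟨?_, ?_, ?_⟩
  · intro i
    rcases Fin.eq_zero_or_eq_succ i with rfl | ⟨i', rfl⟩
    · exact hU
    · simpa using h1 i'
  · intro i j hij
    rcases Fin.eq_zero_or_eq_succ i with rfl | ⟨i', rfl⟩ <;>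
      rcases Fin.eq_zero_or_eq_succ j with rfl | ⟨j', rfl⟩
    · exact absurd rfl hij
    · simp only [Fin.cons_zero, Fin.cons_succ]
      exact Finset.disjoint_sdiff.mono_right (hsub j')
    · simp only [Fin.cons_zero, Fin.cons_succ]
      exact (Finset.disjoint_sdiff.mono_right (hsub i')).symm
    · simp only [Fin.cons_succ]
      exact h2 i' j' (by simpa [Fin.succ_inj] using hij)
  · have huni : univ.biUnion (Fin.cons U σ : Fin (n+1) → Finset α) = U ∪ univ.biUnion σ := by
      ext a
      simp [Fin.exists_fin_succ]
    rw [huni, h3, union_sdiff_of_subset hUX.subset]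

lemma part_tail {α : Type*} [DecidableEq α] {n : ℕ} {X : Finset α}
    {π : Fin (n + 2) → Finset α} (hπ : IsKPartition π X) :
    π 0 ⊂ X ∧ IsKPartition (fun i : Fin (n + 1) => π i.succ) (X \ π 0) := by
  obtain ⟨h1, h2, h3⟩ := hπ
  have hsub : ∀ i, π i ⊆ X := by
    intro i; rw [← h3]; exact subset_biUnion_of_mem π (mem_univ i)
  have hd : ∀ i : Fin (n + 1), Disjoint (π 0) (π i.succ) := fun i =>
    h2 0 i.succ (Fin.succ_ne_zero i).symm
  have hss : π 0 ⊂ X := by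
    rw [Finset.ssubset_iff_of_subset (hsub 0)]
    obtain ⟨a, ha⟩ := h1 1
    exact ⟨a, hsub 1 ha,
      fun h0 => Finset.disjoint_left.mp (h2 0 1 (by simp)) h0 ha⟩
  refine ⟨hss, fun i => h1 _, fun i j hij => h2 _ _ (by simpa [Fin.succ_inj] using hij), ?_⟩
  ext a
  simp only [mem_biUnion, mem_univ, true_and, mem_sdiff]
  constructor
  · rintro ⟨i, hi⟩
    exact ⟨hsub _ hi, fun h0 => Finset.disjoint_left.mp (hd i) h0 hi⟩
  · rintro ⟨haX, ha0⟩
    rw [← h3] at haX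
    obtain ⟨j, -, hj⟩ := mem_biUnion.mp haX
    have hj0 : j ≠ 0 := by rintro rfl; exact ha0 hj
    obtain ⟨j', rfl⟩ := Fin.exists_succ_eq.mpr hj0
    exact ⟨j', hj⟩

lemma main_lemma {α : Type*} [DecidableEq α] (f : Finset α → ℝ) :
    ∀ (n : ℕ) (X : Finset α),
      pMin f (n + 2) X =
        sInf {r : EReal | ∃ U : Finset α, U.Nonempty ∧ U ⊂ X ∧
          r = gRec f (n + 2) X U} := by
  intro n
  induction n with
  | zero =>
    intro X
    unfold pMin
    congr 1
    ext r
    constructor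
    · rintro ⟨π, ⟨h1, h2, h3⟩, rfl⟩
      have hunion : π 0 ∪ π 1 = X := by
        rw [← h3]; ext a; simp [Fin.exists_fin_two]
      have h10 : X \ π 0 = π 1 := by
        rw [← hunion, union_sdiff_cancel_left (h2 0 1 (by simp))]
      refine ⟨π 0, h1 0, ?_, ?_⟩
      · have hs : π 0 ⊆ X := by rw [← hunion]; exact subset_union_left
        rw [Finset.ssubset_iff_of_subset hs]
        obtain ⟨a, ha⟩ := h1 1
        exact ⟨a, by rw [← hunion]; exact subset_union_right ha,
          fun h0 => Finset.disjoint_left.mp (h2 0 1 (by simp)) h0 ha⟩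
      · show _ = gRec f 2 X (π 0)
        rw [show gRec f 2 X (π 0) = ((f (π 0) + f (X \ π 0) : ℝ) : EReal) from rfl, h10,
          Fin.sum_univ_two]
    · rintro ⟨U, hU, hUX, rfl⟩
      have hXU : (X \ U).Nonempty := sdiff_nonempty.mpr hUX.not_subset
      refine ⟨![U, X \ U], ⟨?_, ?_, ?_⟩, ?_⟩
      · intro i; fin_cases i
        · simpa using hU
        · simpa using hXU
      · intro i j hij
        fin_cases i <;> fin_cases j <;>
          simp_all [Finset.disjoint_sdiff, Finset.sdiff_disjoint]
      · ext a
        simp only [mem_biUnion, mem_univ, true_and]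
        constructor
        · rintro ⟨i, hi⟩
          fin_cases i
          · exact hUX.subset (by simpa using hi)
          · exact (mem_sdiff.mp (by simpa using hi)).1
        · intro h
          by_cases hu : a ∈ U
          · exact ⟨0, by simpa using hu⟩
          · exact ⟨1, by simp [mem_sdiff, h, hu]⟩
      · show gRec f 2 X U = _
        rw [show gRec f 2 X U = ((f U + f (X \ U) : ℝ) : EReal) from rfl, Fin.sum_univ_two]
        simp
  | succ n IH =>
    intro X
    have hg : ∀ Y : Finset α, gRec f (n + 3) X Y =
        min (hAux f (gRec f (n + 2)) X Y) (hAux f (gRec f (n + 2)) X (X \ Y)) :=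
      fun Y => rfl
    have hAuxEq : ∀ Y : Finset α,
        hAux f (gRec f (n + 2)) X Y = ((f Y : ℝ) : EReal) + pMin f (n + 2) (X \ Y) := by
      intro Y
      unfold hAux
      rw [← IH (X \ Y)]
    have stepA :
        sInf {r : EReal | ∃ U : Finset α, U.Nonempty ∧ U ⊂ X ∧
            r = gRec f (n + 3) X U} =
        sInf {r : EReal | ∃ U : Finset α, U.Nonempty ∧ U ⊂ X ∧
            r = ((f U : ℝ) : EReal) + pMin f (n + 2) (X \ U)} := by
      apply le_antisymm
      · refine le_sInf fun r hr => ?_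
        obtain ⟨U, hU, hUX, rfl⟩ := hr
        refine le_trans (sInf_le ⟨U, hU, hUX, rfl⟩) ?_
        rw [hg U, hAuxEq U]
        exact min_le_left _ _
      · refine le_sInf fun r hr => ?_
        obtain ⟨U, hU, hUX, rfl⟩ := hr
        have hXU : (X \ U).Nonempty := sdiff_nonempty.mpr hUX.not_subset
        have hXUX : X \ U ⊂ X := sdiff_ssubset hUX.subset hU
        rw [hg U]
        rcases min_choice (hAux f (gRec f (n + 2)) X U)
            (hAux f (gRec f (n + 2)) X (X \ U)) with h | h <;> rw [h, hAuxEq]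
        · exact sInf_le ⟨U, hU, hUX, rfl⟩
        · exact sInf_le ⟨X \ U, hXU, hXUX, rfl⟩
    rw [show (n + 1 + 2) = n + 3 from rfl, stepA]
    apply le_antisymm
    · refine le_sInf fun r hr => ?_
      obtain ⟨U, hU, hUX, rfl⟩ := hr
      rw [show pMin f (n + 2) (X \ U) =
        sInf {r : EReal | ∃ π : Fin (n + 2) → Finset α,
          IsKPartition π (X \ U) ∧ r = ((∑ i, f (π i) : ℝ) : EReal)} from rfl,
        ereal_coe_add_sInf]
      refine le_sInf fun b hb => ?_
      obtain ⟨s, ⟨σ, hσ, rfl⟩, rfl⟩ := hb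
      refine sInf_le ⟨Fin.cons U σ, part_cons hU hUX hσ, ?_⟩
      have hsum : (∑ i, f ((Fin.cons U σ : Fin (n + 3) → Finset α) i)) = f U + ∑ i : Fin (n + 2), f (σ i) := by
        simp [Fin.sum_univ_succ]
      rw [hsum, EReal.coe_add]
    · refine le_sInf fun r hr => ?_
      obtain ⟨π, hπ, rfl⟩ := hr
      obtain ⟨hss, htail⟩ := part_tail (n := n + 1) hπ
      have h0 : (π 0).Nonempty := hπ.1 0
      refine le_trans (sInf_le ⟨π 0, h0, hss, rfl⟩) ?_
      have hle : pMin f (n + 2) (X \ π 0) ≤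
          ((∑ i : Fin (n + 2), f (π i.succ) : ℝ) : EReal) :=
        sInf_le ⟨fun i => π i.succ, htail, rfl⟩
      calc ((f (π 0) : ℝ) : EReal) + pMin f (n + 2) (X \ π 0)
          ≤ ((f (π 0) : ℝ) : EReal) + ((∑ i : Fin (n + 2), f (π i.succ) : ℝ) : EReal) :=
            add_le_add_right hle _
        _ = ((∑ i, f (π i) : ℝ) : EReal) := by
            rw [← EReal.coe_add]
            congr 1
            exact (Fin.sum_univ_succ (n := n + 2) fun i => f (π i)).symm

/-- Let `k ≥ 2`, `V` a finite set with `|V| ≥ k` and `f` a set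
function with `f ∅ = 0`.  Then the minimum over all `k`-partitions
`(U₁, …, U_k)` of `V` of `∑ᵢ f Uᵢ` equals `min_{∅ ⊂ U ⊂ V} g_{k,V}(U)`, in the
extended reals. -/
theorem kPartition_min_eq_gRec_min {α : Type*} [Fintype α] [DecidableEq α]
    (k : ℕ) (hk : 2 ≤ k) (hcard : k ≤ Fintype.card α)
    (f : Finset α → ℝ) (hf_empty : f ∅ = 0) :
    sInf {r : EReal | ∃ π : Fin k → Finset α,
        IsKPartition π (univ : Finset α) ∧ r = ((∑ i, f (π i) : ℝ) : EReal)} =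
      sInf {r : EReal | ∃ U : Finset α, U.Nonempty ∧ U ⊂ univ ∧
        r = gRec f k univ U} := by
  obtain ⟨n, rfl⟩ := Nat.exists_eq_add_of_le' hk
  exact main_lemma f n univ
end
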